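/- For the Ziegler pendulum with F = 0 and k₂ = 0, the function K(φ₁, v₁, v₂) = m₁(v₂l₂² + (v₁+v₂)l₁² + l₁l₂ cos φ₁ (v₁+2v₂)) + m₂ v₂ l₂² + m₃(v₂l₂² + (v₁+v₂)l₃² - l₂l₃(v₁+2v₂) cos φ₁) is a first integral of the reduced system: it is constant along every solution. -/

import Mathlib

/-- The angular momentum (cyclic integral) `K = ∂T/∂φ₂'`. -/
noncomputable def Kmom (m1 m2 m3 l1 l2 l3 φ v1 v2 : ℝ) : ℝ :=
  m1 * (v2 * l2 ^ 2 + (v1 + v2) * l1 ^ 2 + l1 * l2 * Real.cos φ * (v1 + 2 * v2)) +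
    m2 * v2 * l2 ^ 2 +
    m3 * (v2 * l2 ^ 2 + (v1 + v2) * l3 ^ 2 - l2 * l3 * (v1 + 2 * v2) * Real.cos φ)

/-!
Since `φ₂` is cyclic, the second equation of the reduced system is Lagrange's equation
`d/dt (∂T/∂φ₂') = 0` written out: the derivative of `Kmom` along any curve is exactly
`A₂₁ v₁' + A₂₂ v₂' - r₂`, which that equation sets to zero.
-/

open Real

theorem hasDerivAt_Kmom {m1 m2 m3 l1 l2 l3 : ℝ} {φ v1 v2 : ℝ → ℝ} {a1 a2 t : ℝ}
    (hφ : HasDerivAt φ (v1 t) t) (hv1 : HasDerivAt v1 a1 t) (hv2 : HasDerivAt v2 a2 t) :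
    HasDerivAt (fun t => Kmom m1 m2 m3 l1 l2 l3 (φ t) (v1 t) (v2 t))
      ((m1 * l1 ^ 2 + m3 * l3 ^ 2 + (m1 * l1 - m3 * l3) * l2 * cos (φ t)) * a1 +
        ((m1 + m2 + m3) * l2 ^ 2 + m1 * l1 ^ 2 + m3 * l3 ^ 2 +
          2 * (m1 * l1 - m3 * l3) * l2 * cos (φ t)) * a2 -
        (m1 * l1 - m3 * l3) * l2 * v1 t * (v1 t + 2 * v2 t) * sin (φ t)) t := by
  have hc : HasDerivAt (fun t => cos (φ t)) (-sin (φ t) * v1 t) t := hφ.cos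
  have hw : HasDerivAt (fun t => v1 t + 2 * v2 t) (a1 + 2 * a2) t := hv1.add (hv2.const_mul 2)
  have hs : HasDerivAt (fun t => v1 t + v2 t) (a1 + a2) t := hv1.add hv2
  exact (((((hv2.mul_const (l2 ^ 2)).add (hs.mul_const (l1 ^ 2))).add
      ((hc.const_mul (l1 * l2)).mul hw)).const_mul m1 |>.add
        ((hv2.const_mul m2).mul_const (l2 ^ 2))).add
    ((((hv2.mul_const (l2 ^ 2)).add (hs.mul_const (l3 ^ 2))).sub
      ((hw.const_mul (l2 * l3)).mul hc)).const_mul m3)).congr_deriv (by ring)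

theorem angular_momentum_first_integral_general
    (m1 m2 m3 l1 l2 l3 : ℝ)
    (φ v1 v2 a1 a2 : ℝ → ℝ)
    (hφ : ∀ t, HasDerivAt φ (v1 t) t)
    (hv1 : ∀ t, HasDerivAt v1 (a1 t) t)
    (hv2 : ∀ t, HasDerivAt v2 (a2 t) t)
    (heq2 : ∀ t, (m1 * l1 ^ 2 + m3 * l3 ^ 2 + (m1 * l1 - m3 * l3) * l2 * Real.cos (φ t)) * a1 t +
        ((m1 + m2 + m3) * l2 ^ 2 + m1 * l1 ^ 2 + m3 * l3 ^ 2 +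
          2 * (m1 * l1 - m3 * l3) * l2 * Real.cos (φ t)) * a2 t =
      (m1 * l1 - m3 * l3) * l2 * v1 t * (v1 t + 2 * v2 t) * Real.sin (φ t)) :
    ∀ t s : ℝ, Kmom m1 m2 m3 l1 l2 l3 (φ t) (v1 t) (v2 t) =
      Kmom m1 m2 m3 l1 l2 l3 (φ s) (v1 s) (v2 s) := by
  have hK : ∀ t, HasDerivAt (fun t => Kmom m1 m2 m3 l1 l2 l3 (φ t) (v1 t) (v2 t)) 0 t :=
    fun t => (hasDerivAt_Kmom (hφ t) (hv1 t) (hv2 t)).congr_deriv (by rw [heq2 t, sub_self])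
  exact is_const_of_deriv_eq_zero (fun t => (hK t).differentiableAt) (fun t => (hK t).deriv)

/-- For `F = 0` and `k₂ = 0`, the angular momentum `K` is a first integral of the
reduced Ziegler pendulum system. -/
theorem angular_momentum_first_integral
    (m1 m2 m3 l1 l2 l3 k1 : ℝ)
    (hm1 : 0 < m1) (hm2 : 0 < m2) (hm3 : 0 < m3)
    (hl1 : 0 < l1) (hl2 : 0 < l2) (hl3 : 0 < l3)
    (φ v1 v2 a1 a2 : ℝ → ℝ)
    (hφ : ∀ t, HasDerivAt φ (v1 t) t)
    (hv1 : ∀ t, HasDerivAt v1 (a1 t) t)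
    (hv2 : ∀ t, HasDerivAt v2 (a2 t) t)
    -- the linear system A·(a₁, a₂) = (r₁, r₂) with F = 0
    (heq1 : ∀ t, (m1 * l1 ^ 2 + m3 * l3 ^ 2) * a1 t +
        (m1 * l1 ^ 2 + m3 * l3 ^ 2 + (m1 * l1 - m3 * l3) * l2 * Real.cos (φ t)) * a2 t =
      -k1 * φ t - (m1 * l1 - m3 * l3) * l2 * (v2 t) ^ 2 * Real.sin (φ t))
    (heq2 : ∀ t, (m1 * l1 ^ 2 + m3 * l3 ^ 2 + (m1 * l1 - m3 * l3) * l2 * Real.cos (φ t)) * a1 t +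
        ((m1 + m2 + m3) * l2 ^ 2 + m1 * l1 ^ 2 + m3 * l3 ^ 2 +
          2 * (m1 * l1 - m3 * l3) * l2 * Real.cos (φ t)) * a2 t =
      (m1 * l1 - m3 * l3) * l2 * v1 t * (v1 t + 2 * v2 t) * Real.sin (φ t))
    -- nondegeneracy of the mass matrix along the solution
    (hdet : ∀ t, (m1 * l1 ^ 2 + m3 * l3 ^ 2) *
        ((m1 + m2 + m3) * l2 ^ 2 + m1 * l1 ^ 2 + m3 * l3 ^ 2 +
          2 * (m1 * l1 - m3 * l3) * l2 * Real.cos (φ t)) -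
        (m1 * l1 ^ 2 + m3 * l3 ^ 2 + (m1 * l1 - m3 * l3) * l2 * Real.cos (φ t)) ^ 2 ≠ 0) :
    ∀ t s : ℝ, Kmom m1 m2 m3 l1 l2 l3 (φ t) (v1 t) (v2 t) =
      Kmom m1 m2 m3 l1 l2 l3 (φ s) (v1 s) (v2 s) :=
  angular_momentum_first_integral_general m1 m2 m3 l1 l2 l3 φ v1 v2 a1 a2 hφ hv1 hv2 heq2
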